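/- Suppose X is invertible, every λ ∈ ℂ with D¹_N(λ) = 0 satisfies Re λ > 0, and for every eigenvalue λ of W = X⁻¹Y one has n_j − λ r_j ≠ 0 for all j = 1,…,N−1. Then I + W is invertible and every eigenvalue μ of (I + W)⁻¹ satisfies |μ| < 1; that is, the amplification matrix of the backward Euler compact scheme has spectral radius less than 1, so the scheme is stable. -/

import Mathlib

/-- Labels `a`, `b`, `c` for the sequences in the collection `𝒜_N`. -/
inductive Label where
  | a : Label
  | b : Label
  | c : Label
deriving DecidableEq

instance : Fintype Label :=
  ⟨{Label.a, Label.b, Label.c}, fun x => by cases x <;> simp⟩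

/-- Admissibility of a label sequence (with `n = N - 1` labels, index `i` standing
for `j = i + 1`): the last label is not `a` and, for `2 ≤ j ≤ N-1`, `t_j = c` implies
`t_{j-1} = a` while `t_j ∈ {a,b}` implies `t_{j-1} ∈ {b,c}`. -/
def Admissible {n : ℕ} (t : Fin n → Label) : Prop :=
  (∀ h : 0 < n, t ⟨n - 1, by omega⟩ ≠ Label.a) ∧
  ∀ j : ℕ, ∀ h : j + 1 < n,
    (t ⟨j + 1, h⟩ = Label.c → t ⟨j, by omega⟩ = Label.a) ∧
    (t ⟨j + 1, h⟩ ≠ Label.c → t ⟨j, by omega⟩ ≠ Label.a)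

/-- The collection `𝒜_N` (with `n = N - 1` labels per sequence). -/
noncomputable def AdmSet (n : ℕ) : Finset (Fin n → Label) :=
  haveI := Classical.decPred (Admissible (n := n))
  Finset.univ.filter Admissible

/-- The value `v_j(t)`: `A_j` if `t_j = a`, `-B_j` if `t_j = b`, `-C_j` if `t_j = c`. -/
def labelVal {n : ℕ} (A B C : ℕ → ℂ) (t : Fin n → Label) (j : Fin n) : ℂ :=
  match t j with
  | Label.a => A (j.val + 1)
  | Label.b => -B (j.val + 1)
  | Label.c => -C (j.val + 1)

/-- `D¹_N = Σ_{t ∈ 𝒜_N, t_1 ≠ c} ∏_{j=1}^{N-1} v_j(t)`, with `n = N - 1`. -/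
noncomputable def D1 (n : ℕ) (A B C : ℕ → ℂ) : ℂ :=
  haveI : DecidablePred fun t : Fin n → Label => ∀ h : 0 < n, t ⟨0, h⟩ ≠ Label.c :=
    Classical.decPred _
  ∑ t ∈ (AdmSet n).filter (fun t => ∀ h : 0 < n, t ⟨0, h⟩ ≠ Label.c),
    ∏ j, labelVal A B C t j

/-- The `(N-1)×(N-1)` tridiagonal complex matrix with 1-indexed subdiagonal entries
`sub_{i+1}` (at position `(i+1, i)`), diagonal entries `dia_i` and superdiagonal
entries `sup_i` (at position `(i, i+1)`), built from real data. -/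
def triMatC (n : ℕ) (sub dia sup : ℕ → ℝ) : Matrix (Fin n) (Fin n) ℂ :=
  Matrix.of fun i j =>
    if i.val = j.val then (dia (i.val + 1) : ℂ)
    else if i.val + 1 = j.val then (sup (i.val + 1) : ℂ)
    else if j.val + 1 = i.val then (sub (i.val + 1) : ℂ)
    else 0

/-- `μ` is an eigenvalue of the square complex matrix `M` if `M v = μ v` for some
nonzero vector `v`. -/
def IsEig {n : ℕ} (M : Matrix (Fin n) (Fin n) ℂ) (μ : ℂ) : Prop :=
  ∃ v : Fin n → ℂ, v ≠ 0 ∧ M.mulVec v = μ • v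

/-!
Expanding along the first row, the determinant of a tridiagonal matrix satisfies the continuant
recurrence `Dₖ = dia₁ Dₖ₋₁ - sup₁ sub₂ Dₖ₋₂` in terms of its trailing principal minors; splitting
an admissible label sequence after its first label (a single `b`, or a pair `a c`) shows that
`D¹_N` obeys the same recurrence. Hence `D¹_N(λ) = det (λX - Y)`, which vanishes at every
eigenvalue `λ` of `W = X⁻¹Y`, so all eigenvalues of `W` have positive real part. In particular
`-1` is not one, so `I + W` is invertible, and each eigenvalue of `(I + W)⁻¹` is `1 / (1 + λ)`
for an eigenvalue `λ` of `W`, of modulus less than `1` since `Re λ > 0`.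
-/

def D1Admissible {n : ℕ} (t : Fin n → Label) : Prop :=
  Admissible t ∧ ∀ h : 0 < n, t ⟨0, h⟩ ≠ Label.c

open Classical in
lemma D1_eq_sum (n : ℕ) (A B C : ℕ → ℂ) :
    D1 n A B C = ∑ t : Fin n → Label, if D1Admissible t then ∏ j, labelVal A B C t j else 0 := by
  rw [D1, AdmSet, Finset.filter_filter, Finset.sum_filter]
  exact Finset.sum_congr rfl fun t _ => by unfold D1Admissible; congr

lemma Label.sum_univ {M : Type*} [AddCommMonoid M] (g : Label → M) :
    ∑ x, g x = g .a + g .b + g .c := by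
  rw [show (Finset.univ : Finset Label) = {.a, .b, .c} from rfl,
    Finset.sum_insert (by decide), Finset.sum_insert (by decide), Finset.sum_singleton, add_assoc]

lemma sum_univ_cons {M : Type*} [AddCommMonoid M] {n : ℕ} (F : (Fin (n + 1) → Label) → M) :
    ∑ t, F t = ∑ x, ∑ s : Fin n → Label, F (Fin.cons x s) := by
  rw [← (Fin.consEquiv fun _ => Label).sum_comp, Fintype.sum_prod_type]
  rfl

lemma prod_labelVal_cons {n : ℕ} (A B C : ℕ → ℂ) (x : Label) (s : Fin n → Label) :
    ∏ j, labelVal A B C (Fin.cons x s : Fin (n + 1) → Label) j =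
      labelVal A B C (Fin.cons x s : Fin (n + 1) → Label) 0 *
        ∏ j, labelVal (A ∘ Nat.succ) (B ∘ Nat.succ) (C ∘ Nat.succ) s j :=
  Fin.prod_univ_succ _

lemma admissible_cons_iff {n : ℕ} (x : Label) (s : Fin (n + 1) → Label) :
    Admissible (Fin.cons x s : Fin (n + 2) → Label) ↔ Admissible s ∧ (x = .a ↔ s 0 = .c) := by
  constructor
  · rintro ⟨hlast, hpair⟩
    refine ⟨⟨fun _ => hlast (by omega), fun j hj => hpair (j + 1) (by omega)⟩, ?_⟩
    obtain ⟨hc, hnc⟩ := hpair 0 (by omega)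
    exact ⟨fun hx => by_contra fun h => hnc h hx, hc⟩
  · rintro ⟨⟨hlast, hpair⟩, hx⟩
    refine ⟨fun _ => hlast (by omega), fun j hj => ?_⟩
    match j with
    | 0 => exact ⟨hx.2, mt hx.1⟩
    | k + 1 => exact hpair k (by omega)

lemma admissible_cons_of_ne_a {n : ℕ} {x : Label} (hx : x ≠ .a) (s : Fin n → Label) :
    Admissible (Fin.cons x s : Fin (n + 1) → Label) ↔ D1Admissible s := by
  cases n with
  | zero => exact ⟨fun _ => ⟨⟨nofun, nofun⟩, nofun⟩, fun _ => ⟨fun _ => hx, nofun⟩⟩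
  | succ n => rw [admissible_cons_iff, D1Admissible]; simp [hx]

lemma admissible_a_cons_cons {n : ℕ} (y : Label) (s : Fin n → Label) :
    Admissible (Fin.cons .a (Fin.cons y s : Fin (n + 1) → Label) : Fin (n + 2) → Label) ↔
      y = .c ∧ D1Admissible s := by
  rw [admissible_cons_iff]
  by_cases hy : y = .a
  · subst hy; simp
  · rw [admissible_cons_of_ne_a hy]; simp [and_comm]

lemma not_admissible_a_cons (s : Fin 0 → Label) : ¬ Admissible (Fin.cons .a s : Fin 1 → Label) :=
  fun h => h.1 one_pos rfl

open Classical in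
lemma D1_succ (n : ℕ) (A B C : ℕ → ℂ) :
    D1 (n + 1) A B C = -B 1 * D1 n (A ∘ Nat.succ) (B ∘ Nat.succ) (C ∘ Nat.succ) +
      A 1 * ∑ s : Fin n → Label, if Admissible (Fin.cons .a s : Fin (n + 1) → Label) then
        ∏ j, labelVal (A ∘ Nat.succ) (B ∘ Nat.succ) (C ∘ Nat.succ) s j else 0 := by
  have hfirst (x : Label) (s : Fin n → Label) :
      D1Admissible (Fin.cons x s : Fin (n + 1) → Label) ↔ x ≠ .c ∧ Admissible (Fin.cons x s) :=
    and_comm.trans (and_congr_left' ⟨fun h => h n.succ_pos, fun h _ => h⟩)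
  simp only [D1_eq_sum, sum_univ_cons, Label.sum_univ, hfirst, prod_labelVal_cons,
    admissible_cons_of_ne_a (x := .b) nofun, Finset.mul_sum]
  simp [labelVal, add_comm]

lemma D1_zero (A B C : ℕ → ℂ) : D1 0 A B C = 1 := by
  simp [D1_eq_sum, D1Admissible, Admissible]

lemma D1_one (A B C : ℕ → ℂ) : D1 1 A B C = -B 1 := by
  simp [D1_succ, not_admissible_a_cons, D1_zero]

open Classical in
lemma D1_add_two (n : ℕ) (A B C : ℕ → ℂ) :
    D1 (n + 2) A B C = -B 1 * D1 (n + 1) (A ∘ Nat.succ) (B ∘ Nat.succ) (C ∘ Nat.succ) -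
      A 1 * C 2 *
        D1 n (A ∘ Nat.succ ∘ Nat.succ) (B ∘ Nat.succ ∘ Nat.succ) (C ∘ Nat.succ ∘ Nat.succ) := by
  rw [D1_succ, sum_univ_cons, Label.sum_univ, D1_eq_sum n]
  simp only [admissible_a_cons_cons, prod_labelVal_cons]
  simp [labelVal, Finset.mul_sum, sub_eq_add_neg, mul_assoc, ← Finset.sum_neg_distrib, apply_ite]

def tridiag {R : Type*} [Zero R] (n : ℕ) (sub dia sup : ℕ → R) : Matrix (Fin n) (Fin n) R :=
  Matrix.of fun i j =>
    if i.val = j.val then dia (i.val + 1)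
    else if i.val + 1 = j.val then sup (i.val + 1)
    else if j.val + 1 = i.val then sub (i.val + 1)
    else 0

section Tridiag

variable {R : Type*} [CommRing R]

lemma Matrix.det_succ_column_zero_of_eq_zero {n : ℕ} (M : Matrix (Fin (n + 1)) (Fin (n + 1)) R)
    (hM : ∀ i : Fin n, M i.succ 0 = 0) : M.det = M 0 0 * (M.submatrix Fin.succ Fin.succ).det := by
  rw [Matrix.det_succ_column_zero, Fin.sum_univ_succ, Finset.sum_eq_zero fun i _ => by simp [hM]]
  simp

lemma tridiag_submatrix_succ (n : ℕ) (sub dia sup : ℕ → R) :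
    (tridiag (n + 1) sub dia sup).submatrix Fin.succ Fin.succ =
      tridiag n (sub ∘ Nat.succ) (dia ∘ Nat.succ) (sup ∘ Nat.succ) := by
  ext i j
  simp only [tridiag, Matrix.submatrix_apply, Matrix.of_apply, Fin.val_succ, Function.comp_apply]
  split_ifs <;> first | rfl | omega

lemma det_tridiag_add_two (n : ℕ) (sub dia sup : ℕ → R) :
    (tridiag (n + 2) sub dia sup).det =
      dia 1 * (tridiag (n + 1) (sub ∘ Nat.succ) (dia ∘ Nat.succ) (sup ∘ Nat.succ)).det -
        sup 1 * sub 2 *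
          (tridiag n (sub ∘ Nat.succ ∘ Nat.succ) (dia ∘ Nat.succ ∘ Nat.succ)
            (sup ∘ Nat.succ ∘ Nat.succ)).det := by
  have hminor : ((tridiag (n + 2) sub dia sup).submatrix Fin.succ (Fin.succ 0).succAbove).submatrix
      Fin.succ Fin.succ = ((tridiag (n + 2) sub dia sup).submatrix Fin.succ Fin.succ).submatrix
      Fin.succ Fin.succ := by
    ext i j
    simp
  rw [Matrix.det_succ_row_zero, Fin.sum_univ_succ, Fin.sum_univ_succ,
    Finset.sum_eq_zero fun j _ => by simp [tridiag], Fin.succAbove_zero,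
    Matrix.det_succ_column_zero_of_eq_zero ((tridiag (n + 2) sub dia sup).submatrix Fin.succ
      (Fin.succ 0).succAbove) fun i => by simp [tridiag],
    hminor, tridiag_submatrix_succ, tridiag_submatrix_succ]
  simp [tridiag]
  ring

end Tridiag

lemma D1_eq_det_tridiag : ∀ (n : ℕ) (A B C : ℕ → ℂ),
    D1 n A B C = (tridiag n (-C) (-B) (-A)).det
  | 0, _, _, _ => by simp [D1_zero]
  | 1, _, _, _ => by simp [D1_one, tridiag]
  | n + 2, A, B, C => by
    rw [det_tridiag_add_two, D1_add_two, D1_eq_det_tridiag (n + 1), D1_eq_det_tridiag n]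
    simp only [Pi.neg_comp, Pi.neg_apply]
    ring

lemma smul_triMatC_sub_triMatC (k : ℕ) (p q r l m n : ℕ → ℝ) (lam : ℂ) :
    lam • triMatC k p q r - triMatC k l m n =
      tridiag k (-fun j => (l j : ℂ) - lam * p j) (-fun j => (m j : ℂ) - lam * q j)
        (-fun j => (n j : ℂ) - lam * r j) := by
  ext i j
  simp only [triMatC, tridiag, Matrix.sub_apply, Matrix.smul_apply, Matrix.of_apply, Pi.neg_apply,
    smul_eq_mul]
  split_ifs <;> ring

section Eigenvalues

open Matrix

variable {k : ℕ}

lemma IsEig.det_smul_sub_eq_zero {X Y : Matrix (Fin k) (Fin k) ℂ} {lam : ℂ} (hX : IsUnit X.det)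
    (h : IsEig (X⁻¹ * Y) lam) : (lam • X - Y).det = 0 := by
  obtain ⟨v, hv, hWv⟩ := h
  refine exists_mulVec_eq_zero_iff.mp ⟨v, hv, ?_⟩
  have hYv : Y *ᵥ v = lam • X *ᵥ v := by
    rw [← mulVec_smul, ← hWv, mulVec_mulVec, ← mul_assoc, mul_nonsing_inv X hX, one_mul]
  rw [sub_mulVec, smul_mulVec, hYv, sub_self]

lemma IsEig.inv_of_nonsing_inv {A : Matrix (Fin k) (Fin k) ℂ} {μ : ℂ} (hA : IsUnit A.det)
    (h : IsEig A⁻¹ μ) : IsEig A μ⁻¹ := by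
  obtain ⟨v, hv, hAv⟩ := h
  have hv_eq : v = μ • A *ᵥ v := by
    rw [← mulVec_smul, ← hAv, mulVec_mulVec, mul_nonsing_inv A hA, one_mulVec]
  have hμ : μ ≠ 0 := by
    rintro rfl
    exact hv (by simpa using hv_eq)
  refine ⟨v, hv, ?_⟩
  conv_rhs => rw [hv_eq, smul_smul, inv_mul_cancel₀ hμ, one_smul]

lemma IsEig.sub_one_of_one_add {W : Matrix (Fin k) (Fin k) ℂ} {ν : ℂ} (h : IsEig (1 + W) ν) :
    IsEig W (ν - 1) := by
  obtain ⟨v, hv, hWv⟩ := h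
  refine ⟨v, hv, ?_⟩
  rw [add_mulVec, one_mulVec] at hWv
  rw [sub_smul, one_smul, ← hWv, add_sub_cancel_left]

lemma isUnit_det_one_add_of_re_pos {W : Matrix (Fin k) (Fin k) ℂ}
    (hW : ∀ lam, IsEig W lam → 0 < lam.re) : IsUnit (1 + W).det := by
  refine isUnit_iff_ne_zero.mpr fun hdet => ?_
  obtain ⟨v, hv, hWv⟩ := exists_mulVec_eq_zero_iff.mpr hdet
  have := hW (0 - 1) (IsEig.sub_one_of_one_add ⟨v, hv, by rw [hWv, zero_smul]⟩)
  norm_num at this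

lemma norm_lt_one_of_isEig_inv_one_add {W : Matrix (Fin k) (Fin k) ℂ}
    (hW : ∀ lam, IsEig W lam → 0 < lam.re) {μ : ℂ} (hμ : IsEig (1 + W)⁻¹ μ) : ‖μ‖ < 1 := by
  have hre : 1 < μ⁻¹.re := by
    simpa using hW _ (hμ.inv_of_nonsing_inv (isUnit_det_one_add_of_re_pos hW)).sub_one_of_one_add
  have : 1 < ‖μ‖⁻¹ := norm_inv μ ▸ hre.trans_le (Complex.re_le_norm _)
  exact (one_lt_inv_iff₀.mp this).2

end Eigenvalues

theorem stmt3_general (N : ℕ) (p q r l m n : ℕ → ℝ)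
    (hX : IsUnit (triMatC (N - 1) p q r).det)
    (hroot : ∀ lam : ℂ,
      D1 (N - 1) (fun j => (n j : ℂ) - lam * (r j : ℂ))
        (fun j => (m j : ℂ) - lam * (q j : ℂ))
        (fun j => (l j : ℂ) - lam * (p j : ℂ)) = 0 → 0 < lam.re) :
    IsUnit (1 + (triMatC (N - 1) p q r)⁻¹ * triMatC (N - 1) l m n).det ∧
    ∀ μ : ℂ,
      IsEig (1 + (triMatC (N - 1) p q r)⁻¹ * triMatC (N - 1) l m n)⁻¹ μ →
      ‖μ‖ < 1 := by
  have hW : ∀ lam, IsEig ((triMatC (N - 1) p q r)⁻¹ * triMatC (N - 1) l m n) lam → 0 < lam.re :=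
    fun lam hlam => hroot lam <| by
      rw [D1_eq_det_tridiag, ← smul_triMatC_sub_triMatC]
      exact hlam.det_smul_sub_eq_zero hX
  exact ⟨isUnit_det_one_add_of_re_pos hW, fun μ => norm_lt_one_of_isEig_inv_one_add hW⟩

/-- If `X` is invertible, every root of `D¹_N` has positive real part, and
`n_j - λ r_j ≠ 0` for every eigenvalue `λ` of `W = X⁻¹ Y` and every `j`, then
`I + W` is invertible and every eigenvalue `μ` of `(I + W)⁻¹` satisfies `|μ| < 1`
(the backward Euler compact scheme is stable). -/
theorem stmt3 (N : ℕ) (hN : 2 ≤ N) (p q r l m n : ℕ → ℝ)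
    (hX : IsUnit (triMatC (N - 1) p q r).det)
    (hroot : ∀ lam : ℂ,
      D1 (N - 1) (fun j => (n j : ℂ) - lam * (r j : ℂ))
        (fun j => (m j : ℂ) - lam * (q j : ℂ))
        (fun j => (l j : ℂ) - lam * (p j : ℂ)) = 0 → 0 < lam.re)
    (hA : ∀ lam : ℂ,
      IsEig ((triMatC (N - 1) p q r)⁻¹ * triMatC (N - 1) l m n) lam →
      ∀ j, 1 ≤ j → j ≤ N - 1 → (n j : ℂ) - lam * (r j : ℂ) ≠ 0) :
    IsUnit (1 + (triMatC (N - 1) p q r)⁻¹ * triMatC (N - 1) l m n).det ∧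
    ∀ μ : ℂ,
      IsEig (1 + (triMatC (N - 1) p q r)⁻¹ * triMatC (N - 1) l m n)⁻¹ μ →
      ‖μ‖ < 1 :=
  stmt3_general N p q r l m n hX hroot
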